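/- arXiv:2505.01152 — 4 statements merged into one kernel-verified Lean document; each statement's English description precedes it below -/
import Mathlib

section
/- Let l ≥ 0, L = 2^l, F = [[1,0],[1,1]] over GF(2), and B_L = F^{⊗l}. For 1 ≤ i ≤ L, the number of nonzero entries of the i-th row of B_L equals 2^{s(i−1)}, where s(m) denotes the number of ones in the binary expansion of m. -/
/-- The 2×2 polarization kernel `F = [[1,0],[1,1]]` over `GF(2)`. -/
def polarF : Matrix (Fin 2) (Fin 2) (ZMod 2) := !![1, 0; 1, 1]

/-- `polarB l` is the `l`-fold Kronecker power `F^{⊗l}` of the polarization kernel,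
with rows and columns reindexed by `Fin (2^l)` (row-major order), so that
`B_L = B_{L/2} ⊗ F` with `L = 2^l`. -/
def polarB : (l : ℕ) → Matrix (Fin (2 ^ l)) (Fin (2 ^ l)) (ZMod 2)
  | 0 => 1
  | l + 1 =>
      Matrix.reindex (finProdFinEquiv.trans (finCongr (pow_succ 2 l).symm))
        (finProdFinEquiv.trans (finCongr (pow_succ 2 l).symm))
        (Matrix.kroneckerMap (· * ·) (polarB l) polarF)

/-- `polarBt l i` is the `i`-th polarization submatrix `B̃_L(i)` (with `i` 1-indexed,
`L = 2^l`): the matrix obtained from `B_L` by replacing its first `i - 1` rows with zeros. -/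
def polarBt (l : ℕ) (i : ℕ) : Matrix (Fin (2 ^ l)) (Fin (2 ^ l)) (ZMod 2) :=
  Matrix.of fun r c => if i - 1 ≤ r.val then polarB l r c else 0

lemma digsum (a b : ℕ) (hb : b < 2) :
    (Nat.digits 2 (b + 2 * a)).sum = b + (Nat.digits 2 a).sum := by
  rcases Nat.eq_zero_or_pos (b + 2 * a) with h | h
  · have hb0 : b = 0 := by omega
    have ha0 : a = 0 := by omega
    simp [hb0, ha0]
  · rw [Nat.digits_def' (by norm_num : 1 < 2) h]
    have h1 : (b + 2 * a) % 2 = b := by omega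
    have h2 : (b + 2 * a) / 2 = a := by omega
    simp [h1, h2]

/-- The number of nonzero entries of the row of `B_L = F^{⊗l}` indexed by
`i : Fin (2^l)` (i.e. the 1-indexed row `i+1`) equals `2^{s(i)}`, where `s(m)` is the number
of ones in the binary expansion of `m` (here computed as the sum of the base-2 digits). -/
theorem polarB_row_weight (l : ℕ) (i : Fin (2 ^ l)) :
    (Finset.univ.filter fun j : Fin (2 ^ l) => polarB l i j ≠ 0).card
      = 2 ^ (Nat.digits 2 i.val).sum := by
  induction l with
  | zero =>
      have h0 : (Nat.digits 2 i.val).sum = 0 := by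
        have : i.val = 0 := by omega
        simp [this]
      have huniv : (Finset.univ.filter fun j : Fin (2 ^ 0) => polarB 0 i j ≠ 0)
          = Finset.univ := by
        ext j
        have hij : i = j := Fin.ext (by omega)
        simp [polarB, Matrix.one_apply, hij]
      rw [h0, huniv]
      simp
  | succ l ih =>
      set e : Fin (2 ^ l) × Fin 2 ≃ Fin (2 ^ (l + 1)) :=
        finProdFinEquiv.trans (finCongr (pow_succ 2 l).symm) with he
      obtain ⟨⟨a, b⟩, rfl⟩ := e.surjective i
      have hval : (e (a, b)).val = b.val + 2 * a.val := by
        simp only [he, Equiv.trans_apply, finCongr_apply, Fin.coe_cast,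
          finProdFinEquiv_apply_val]
      have hentry : ∀ j : Fin (2 ^ (l + 1)),
          polarB (l + 1) (e (a, b)) j
            = polarB l a (e.symm j).1 * polarF b (e.symm j).2 := by
        intro j
        simp [polarB, Matrix.reindex_apply, Matrix.submatrix_apply, he]
      have hcard : (Finset.univ.filter fun j : Fin (2 ^ (l + 1)) =>
            polarB (l + 1) (e (a, b)) j ≠ 0).card
          = (Finset.univ.filter fun p : Fin (2 ^ l) × Fin 2 =>
              polarB l a p.1 ≠ 0 ∧ polarF b p.2 ≠ 0).card := by
        apply Finset.card_bij (fun j _ => e.symm j)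
        · intro j hj
          simp only [Finset.mem_filter, Finset.mem_univ, true_and] at hj ⊢
          rw [hentry] at hj
          exact mul_ne_zero_iff.mp hj
        · intro j _ j' _ h
          exact e.symm.injective h
        · intro p hp
          refine ⟨e p, ?_, by simp⟩
          simp only [Finset.mem_filter, Finset.mem_univ, true_and] at hp ⊢
          rw [hentry]
          simp [mul_ne_zero_iff, hp.1, hp.2]
      rw [hcard]
      have hsplit : (Finset.univ.filter fun p : Fin (2 ^ l) × Fin 2 =>
              polarB l a p.1 ≠ 0 ∧ polarF b p.2 ≠ 0)
          = (Finset.univ.filter fun x : Fin (2 ^ l) => polarB l a x ≠ 0) ×ˢ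
            (Finset.univ.filter fun y : Fin 2 => polarF b y ≠ 0) := by
        ext ⟨x, y⟩; simp
      rw [hsplit, Finset.card_product, ih a]
      have hF : (Finset.univ.filter fun y : Fin 2 => polarF b y ≠ 0).card = 2 ^ b.val := by
        fin_cases b <;> decide
      rw [hF, hval, digsum a b.val b.isLt, pow_add, mul_comm]
end

section
/- Let l ≥ 1, L = 2^l, F = [[1,0],[1,1]] over GF(2), and B_L = F^{⊗l}. Let H_L(i) denote the number of nonzero entries of the i-th row of B_L (rows indexed 1,…,L). Then H_L(1) = 1, and for every i with 2 ≤ i ≤ L, H_L(i) = 2·H_L(i − 2^{⌈log₂ i⌉ − 1}). -/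
/-- The Hamming weight `H_L` of a row of `B_L = F^{⊗l}`. -/
def rowWeight (l : ℕ) (r : Fin (2 ^ l)) : ℕ :=
  (Finset.univ.filter fun j : Fin (2 ^ l) => polarB l r j ≠ 0).card

/-! Since `B_{2L} = B_L ⊗ F` and the two rows of `F` have weights `1` and `2`, row `r` of `B_L`
(counted from `0`) has weight `2 ^ s(r)`, where `s(r)` is the number of ones in the binary expansion
of `r`. For `2 ≤ i ≤ L`, `2 ^ (⌈log₂ i⌉ - 1)` is the leading binary digit of `i - 1`, so removing
it lowers `s` by one and halves the weight. -/

namespace Nat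

theorem bitIndices_add_two_pow {n k : ℕ} (hn : n < 2 ^ k) :
    (n + 2 ^ k).bitIndices = n.bitIndices ++ [k] := by
  have hsorted : (n.bitIndices ++ [k]).SortedLT := by
    refine List.Pairwise.sortedLT
      (List.pairwise_append.2 ⟨bitIndices_sorted.pairwise, by simp, fun a ha b hb => ?_⟩)
    obtain rfl := List.mem_singleton.1 hb
    exact (Nat.pow_lt_pow_iff_right (by norm_num)).1 ((two_pow_le_of_mem_bitIndices ha).trans_lt hn)
  simpa using bitIndices_sum_map_two_pow hsorted

theorem length_bitIndices_two_mul_add (n : ℕ) {b : ℕ} (hb : b < 2) :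
    (2 * n + b).bitIndices.length = n.bitIndices.length + b := by
  interval_cases b <;> simp

end Nat

def polarIndexEquiv (l : ℕ) : Fin (2 ^ l) × Fin 2 ≃ Fin (2 ^ (l + 1)) :=
  finProdFinEquiv.trans (finCongr (pow_succ 2 l).symm)

theorem polarIndexEquiv_apply_val (l : ℕ) (p : Fin (2 ^ l) × Fin 2) :
    (polarIndexEquiv l p).val = 2 * p.1.val + p.2.val := by
  simp [polarIndexEquiv, finProdFinEquiv]
  ring

theorem polarB_succ_apply (l : ℕ) (x y : Fin (2 ^ l) × Fin 2) :
    polarB (l + 1) (polarIndexEquiv l x) (polarIndexEquiv l y)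
      = polarB l x.1 y.1 * polarF x.2 y.2 := by
  simp [polarB, polarIndexEquiv]

theorem card_polarF_row_ne_zero (b : Fin 2) :
    (Finset.univ.filter fun j => polarF b j ≠ 0).card = b.val + 1 := by
  decide +revert

theorem rowWeight_succ (l : ℕ) (a : Fin (2 ^ l)) (b : Fin 2) :
    rowWeight (l + 1) (polarIndexEquiv l (a, b)) = rowWeight l a * (b.val + 1) := by
  rw [rowWeight, ← card_polarF_row_ne_zero b, rowWeight, ← Finset.card_product]
  refine Finset.card_equiv (polarIndexEquiv l).symm fun j => ?_
  obtain ⟨y, rfl⟩ := (polarIndexEquiv l).surjective j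
  simp only [Finset.mem_filter, Finset.mem_univ, true_and, Finset.mem_product,
    Equiv.symm_apply_apply, polarB_succ_apply, mul_ne_zero_iff]

theorem rowWeight_eq_two_pow_length_bitIndices (l : ℕ) (r : Fin (2 ^ l)) :
    rowWeight l r = 2 ^ r.val.bitIndices.length := by
  induction l with
  | zero =>
    fin_cases r
    decide
  | succ l ih =>
    obtain ⟨⟨a, b⟩, rfl⟩ := (polarIndexEquiv l).surjective r
    rw [rowWeight_succ, ih, polarIndexEquiv_apply_val,
      Nat.length_bitIndices_two_mul_add _ b.isLt, pow_add]
    fin_cases b <;> rfl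

/-- With rows 1-indexed, the row weights `H_L(i)` of `B_L = F^{⊗l}`
satisfy `H_L(1) = 1` and, for `2 ≤ i ≤ L = 2^l`,
`H_L(i) = 2 · H_L(i − 2^{⌈log₂ i⌉ − 1})` (the paper's recursion (24)). -/
theorem rowWeight_recursion (l : ℕ) :
    rowWeight l ⟨0, by positivity⟩ = 1 ∧
    ∀ i : ℕ, ∀ (h2 : 2 ≤ i) (hL : i ≤ 2 ^ l),
      rowWeight l ⟨i - 1, by omega⟩
        = 2 * rowWeight l
            ⟨i - 2 ^ (Nat.clog 2 i - 1) - 1,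
              by have h := Nat.sub_le i (2 ^ (Nat.clog 2 i - 1)); omega⟩ := by
  refine ⟨by simp [rowWeight_eq_two_pow_length_bitIndices], fun i h2 hL => ?_⟩
  simp only [rowWeight_eq_two_pow_length_bitIndices]
  set k := Nat.clog 2 i - 1
  have hlow : 2 ^ k < i := Nat.pow_pred_clog_lt_self one_lt_two h2
  have hhigh : i ≤ 2 ^ (k + 1) := by
    rw [Nat.sub_add_cancel (Nat.clog_pos one_lt_two h2)]
    exact Nat.le_pow_clog one_lt_two i
  have hsplit : i - 1 = (i - 2 ^ k - 1) + 2 ^ k := by omega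
  rw [hsplit, Nat.bitIndices_add_two_pow (by rw [pow_succ] at hhigh; omega)]
  simp [pow_succ, mul_comm]
end

section
/- Let l ≥ 1, L = 2^l, F = [[1,0],[1,1]] over GF(2), and B_L = F^{⊗l} with rows and columns indexed 1,…,L. Fix i with 1 ≤ i ≤ L and set T = 2^{⌈log₂(L+1−i)⌉}. Then: (a) for every row index k with i ≤ k ≤ L and every column index j with 1 ≤ j ≤ L − T, (B_L)_{k,j} = (B_L)_{k,j+T}; and (b) T is minimal with this property among powers of two, i.e., if T' = 2^a < T then there exist k with i ≤ k ≤ L and j with 1 ≤ j ≤ L − T' such that (B_L)_{k,j} ≠ (B_L)_{k,j+T'}. Consequently the columns of B̃_L(i) consist of β_L(i) = L/2^{⌈log₂(L+1−i)⌉} identical repetitions of its first L/β_L(i) columns. -/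
/-!
Reading indices in binary, the Kronecker recursion `B_{2L} = B_L ⊗ F` shows that
`(B_L)_{k,j} = 1` exactly when the bits of `j` are among those of `k` (Lucas' theorem mod 2).
A row `k ≥ i - 1 ≥ L - T` has all bits of positions `log₂ T, …, l - 1` set, so its entries
depend only on `j mod T`. Conversely, if `2^a < T` then `2^a ≤ L - i`, so the row
`L - 1 - 2^a` is allowed; its bit `a` is clear, which separates the columns `0` and `2^a`.
-/

namespace Nat

theorem and_eq_left_iff_testBit_imp {j k : ℕ} :
    j &&& k = j ↔ ∀ t, j.testBit t → k.testBit t := by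
  constructor
  · intro h t ht
    simpa [ht] using congrArg (testBit · t) h
  · intro h
    exact eq_of_testBit_eq fun t => by
      rw [testBit_and, Bool.and_eq_left_iff_imp]; exact h t

theorem and_eq_left_iff_div_two_mod_two {j k : ℕ} :
    j &&& k = j ↔ j / 2 &&& k / 2 = j / 2 ∧ j % 2 &&& k % 2 = j % 2 := by
  rw [← and_div_two, ← pow_one 2, ← and_mod_two_pow, pow_one]
  constructor
  · intro h; rw [h]; simp
  · rintro ⟨h1, h2⟩
    omega

theorem testBit_of_two_pow_sub_two_pow_le {l m k t : ℕ} (hk : 2 ^ l - 2 ^ m ≤ k)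
    (hkl : k < 2 ^ l) (hmt : m ≤ t) (htl : t < l) : k.testBit t := by
  have hml : m ≤ l := by omega
  have hdiv : k / 2 ^ m = 2 ^ (l - m) - 1 := by
    have hpow : 2 ^ l = 2 ^ (l - m) * 2 ^ m := by rw [← pow_add, Nat.sub_add_cancel hml]
    apply Nat.div_eq_of_lt_le
    · rwa [Nat.sub_one_mul, ← hpow]
    · rwa [Nat.sub_one_add_one (by positivity), ← hpow]
  have := testBit_div_two_pow k (t - m) (n := m)
  rw [hdiv, testBit_two_pow_sub_one, Nat.sub_add_cancel hmt] at this
  exact this ▸ decide_eq_true (by omega)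

theorem and_eq_left_iff_mod_two_pow {l m j k : ℕ} (hj : j < 2 ^ l)
    (hk : 2 ^ l - 2 ^ m ≤ k) (hkl : k < 2 ^ l) :
    j &&& k = j ↔ j % 2 ^ m &&& k = j % 2 ^ m := by
  simp only [and_eq_left_iff_testBit_imp, testBit_mod_two_pow, Bool.and_eq_true,
    decide_eq_true_eq, and_imp]
  refine ⟨fun h t _ ht => h t ht, fun h t ht => ?_⟩
  by_cases htm : t < m
  · exact h t htm ht
  by_cases htl : t < l
  · exact testBit_of_two_pow_sub_two_pow_le hk hkl (by omega) htl
  · have := testBit_lt_two_pow (hj.trans_le (Nat.pow_le_pow_right two_pos (not_lt.mp htl)))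
    simp_all

theorem testBit_two_pow_sub_one_sub_two_pow_self {l a : ℕ} (ha : a < l) :
    (2 ^ l - 1 - 2 ^ a).testBit a = false := by
  have h := testBit_two_pow_add_eq (2 ^ l - 1 - 2 ^ a) a
  rw [Nat.add_sub_of_le (Nat.le_sub_one_of_lt (Nat.pow_lt_pow_right one_lt_two ha)),
    testBit_two_pow_sub_one] at h
  simpa [ha] using h

end Nat

theorem polarF_apply (a b : Fin 2) :
    polarF a b = if (b : ℕ) &&& a = b then 1 else 0 := by
  fin_cases a <;> fin_cases b <;> rfl

theorem polarB_apply (l : ℕ) (k j : Fin (2 ^ l)) :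
    polarB l k j = if (j : ℕ) &&& k = j then 1 else 0 := by
  induction l with
  | zero =>
    obtain rfl : k = j := Subsingleton.elim (α := Fin 1) _ _
    simp [polarB]
  | succ l ih =>
    simp only [polarB, Matrix.reindex_apply, Matrix.submatrix_apply, Matrix.kroneckerMap_apply,
      ih, polarF_apply, ite_zero_mul_ite_zero, mul_one]
    simp only [Nat.and_eq_left_iff_div_two_mod_two (j := j)]
    -- the reindexing sends `x : Fin (2 ^ (l + 1))` to `(x / 2, x % 2)` definitionally
    rfl

theorem polarB_apply_eq_of_mod_eq {l m : ℕ} {k j j' : Fin (2 ^ l)}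
    (hk : 2 ^ l - 2 ^ m ≤ (k : ℕ)) (hjj' : (j : ℕ) % 2 ^ m = j' % 2 ^ m) :
    polarB l k j = polarB l k j' := by
  simp only [polarB_apply, Nat.and_eq_left_iff_mod_two_pow j.isLt hk k.isLt,
    Nat.and_eq_left_iff_mod_two_pow j'.isLt hk k.isLt, hjj']

theorem polarB_apply_zero_right {l : ℕ} (k : Fin (2 ^ l)) (h : 0 < 2 ^ l) :
    polarB l k ⟨0, h⟩ = 1 := by
  simp [polarB_apply]

theorem polarB_apply_two_pow_right {l a : ℕ} (k : Fin (2 ^ l)) (h : 2 ^ a < 2 ^ l) :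
    polarB l k ⟨2 ^ a, h⟩ = if k.val.testBit a then 1 else 0 := by
  rw [polarB_apply]
  cases hk : k.val.testBit a <;> simp [Nat.two_pow_and, hk, (Nat.two_pow_pos a).ne]

theorem polarB_column_period_general (l : ℕ) (i : ℕ) (h1 : 1 ≤ i)
    (T : ℕ) (hT : T = 2 ^ Nat.clog 2 (2 ^ l + 1 - i)) :
    (∀ k : Fin (2 ^ l), i ≤ k.val + 1 →
        ∀ c : ℕ, ∀ (hc : c + T < 2 ^ l),
          polarB l k ⟨c, Nat.lt_of_le_of_lt (Nat.le_add_right _ _) hc⟩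
            = polarB l k ⟨c + T, hc⟩) ∧
    (∀ a : ℕ, 2 ^ a < T →
        ∃ (k : Fin (2 ^ l)) (c : ℕ) (hc : c + 2 ^ a < 2 ^ l),
          i ≤ k.val + 1 ∧
            polarB l k ⟨c, Nat.lt_of_le_of_lt (Nat.le_add_right _ _) hc⟩
              ≠ polarB l k ⟨c + 2 ^ a, hc⟩) ∧
    (∀ r c : Fin (2 ^ l),
        polarBt l i r c
          = polarBt l i r ⟨c.val % T, Nat.lt_of_le_of_lt (Nat.mod_le _ _) c.isLt⟩) := by
  have hnT : 2 ^ l + 1 - i ≤ T := hT ▸ Nat.le_pow_clog one_lt_two _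
  have hrow (k : Fin (2 ^ l)) (hk : i ≤ k.val + 1) : 2 ^ l - T ≤ k := by omega
  subst hT
  refine ⟨fun k hk c hc => ?_, fun a ha => ?_, fun r c => ?_⟩
  · exact polarB_apply_eq_of_mod_eq (hrow k hk) (Nat.add_mod_right c _).symm
  · have han : 2 ^ a < 2 ^ l + 1 - i := (Nat.lt_clog_iff_pow_lt one_lt_two).mp
      ((Nat.pow_lt_pow_iff_right one_lt_two).mp ha)
    have hpow : 2 ^ a < 2 ^ l := by have := Nat.two_pow_pos a; omega
    have hk : 2 ^ l - 1 - 2 ^ a < 2 ^ l :=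
      (Nat.sub_le _ _).trans_lt (Nat.sub_one_lt (Nat.two_pow_pos l).ne')
    have hik : i ≤ 2 ^ l - 1 - 2 ^ a + 1 := by omega
    refine ⟨⟨_, hk⟩, 0, by omega, hik, ?_⟩
    simp only [zero_add, polarB_apply_zero_right, polarB_apply_two_pow_right,
      Nat.testBit_two_pow_sub_one_sub_two_pow_self ((Nat.pow_lt_pow_iff_right one_lt_two).mp hpow)]
    decide
  · simp only [polarBt, Matrix.of_apply]
    split_ifs with hr
    · exact polarB_apply_eq_of_mod_eq (hrow r (by omega)) (Nat.mod_mod _ _).symm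
    · rfl

/-- Let `L = 2^l`, `1 ≤ i ≤ L`, and `T = 2^{⌈log₂(L+1−i)⌉}`. Then
(a) for every row of `B_L` with (1-indexed) index `≥ i` the columns are `T`-periodic:
entries at (0-indexed) columns `c` and `c + T` agree whenever `c + T < L`;
(b) `T` is the least power of two with this property: for any power `2^a < T` some such row
has two entries at distance `2^a` that differ;
(c) consequently the columns of `B̃_L(i)` consist of `β_L(i) = L / T` identical repetitions
of its first `T = L / β_L(i)` columns (each column equals the column of its index mod `T`). -/
theorem polarB_column_period (l : ℕ) (hl : 1 ≤ l) (i : ℕ) (h1 : 1 ≤ i) (hL : i ≤ 2 ^ l)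
    (T : ℕ) (hT : T = 2 ^ Nat.clog 2 (2 ^ l + 1 - i)) :
    (∀ k : Fin (2 ^ l), i ≤ k.val + 1 →
        ∀ c : ℕ, ∀ (hc : c + T < 2 ^ l),
          polarB l k ⟨c, Nat.lt_of_le_of_lt (Nat.le_add_right _ _) hc⟩
            = polarB l k ⟨c + T, hc⟩) ∧
    (∀ a : ℕ, 2 ^ a < T →
        ∃ (k : Fin (2 ^ l)) (c : ℕ) (hc : c + 2 ^ a < 2 ^ l),
          i ≤ k.val + 1 ∧
            polarB l k ⟨c, Nat.lt_of_le_of_lt (Nat.le_add_right _ _) hc⟩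
              ≠ polarB l k ⟨c + 2 ^ a, hc⟩) ∧
    (∀ r c : Fin (2 ^ l),
        polarBt l i r c
          = polarBt l i r ⟨c.val % T, Nat.lt_of_le_of_lt (Nat.mod_le _ _) c.isLt⟩) :=
  polarB_column_period_general l i h1 T hT
end

section
/- Let l ≥ 1, L = 2^l, F = [[1,0],[1,1]] over GF(2), and B_L = F^{⊗l} with rows and columns indexed 1,…,L. For 1 ≤ i ≤ L, the number of initial consecutive ones of the i-th row of B_L — that is, the largest c such that (B_L)_{i,j} = 1 for all 1 ≤ j ≤ c — equals 2^{v₂(i)}, where v₂(i) is the 2-adic valuation of i (the largest exponent a with 2^a dividing i). -/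
/-! Entrywise, `F^{⊗l}` is Pascal's triangle mod 2: each Kronecker factor splits off the last
binary digit of both indices, so Lucas' theorem gives `(B_L)_{r,c} = C(r, c) mod 2`.
If `r + 1 = 2^v · (2s + 1)` with `v > 0`, then `r = 2r' + 1` with `r' + 1 = 2^(v-1) · (2s + 1)`,
and Lucas gives `C(2r' + 1, c) ≡ C(r', ⌊c/2⌋)`, which lowers `v` by one. At `v = 0` the row
index `r` is even, so `C(r, 0) = 1` and `C(r, 1) = r ≡ 0`. -/

theorem cast_choose_eq_choose_mod_two_mul_choose_div_two (n k : ℕ) :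
    (n.choose k : ZMod 2) = (n % 2).choose (k % 2) * (n / 2).choose (k / 2) := by
  exact_mod_cast (ZMod.natCast_eq_natCast_iff _ _ _).2
    Choose.choose_modEq_choose_mod_mul_choose_div_nat

theorem cast_choose_two_mul_add_one (n k : ℕ) :
    ((2 * n + 1).choose k : ZMod 2) = n.choose (k / 2) := by
  have hk : (1).choose (k % 2) = 1 := by
    rcases Nat.mod_two_eq_zero_or_one k with h | h <;> simp [h]
  rw [cast_choose_eq_choose_mod_two_mul_choose_div_two]
  simp [Nat.mul_add_div, hk]

theorem cast_choose_of_succ_eq_two_pow_mul_odd {n v s : ℕ} (h : n + 1 = 2 ^ v * (2 * s + 1)) :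
    (∀ c < 2 ^ v, (n.choose c : ZMod 2) = 1) ∧ (n.choose (2 ^ v) : ZMod 2) = 0 := by
  induction v generalizing n with
  | zero =>
    obtain rfl : n = 2 * s := by omega
    refine ⟨fun c hc => ?_, ?_⟩
    · simp [show c = 0 by omega]
    · rw [pow_zero, Nat.choose_one_right, Nat.cast_mul, ZMod.natCast_self, zero_mul]
  | succ v ih =>
    have hn : n + 1 = 2 * (2 ^ v * (2 * s + 1)) := by rw [h, pow_succ]; ring
    obtain ⟨m, rfl, hm⟩ : ∃ m, n = 2 * m + 1 ∧ m + 1 = 2 ^ v * (2 * s + 1) :=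
      ⟨n / 2, by omega, by omega⟩
    refine ⟨fun c hc => ?_, ?_⟩
    · rw [cast_choose_two_mul_add_one]
      exact (ih hm).1 _ (by rw [pow_succ] at hc; omega)
    · rw [cast_choose_two_mul_add_one, pow_succ, Nat.mul_div_cancel _ two_pos]
      exact (ih hm).2

theorem polarF_apply_s14 (a b : Fin 2) : polarF a b = (a.val.choose b.val : ZMod 2) := by
  fin_cases a <;> fin_cases b <;> rfl

theorem polarB_apply_s14 (l : ℕ) (r c : Fin (2 ^ l)) :
    polarB l r c = (r.val.choose c.val : ZMod 2) := by
  induction l with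
  | zero =>
    obtain rfl : r = c := Subsingleton.elim (α := Fin 1) r c
    simp [polarB]
  | succ l ih =>
    simp only [polarB, Matrix.reindex_apply, Matrix.submatrix_apply, Matrix.kroneckerMap_apply,
      Equiv.symm_trans_apply, finCongr_symm, finCongr_apply, finProdFinEquiv_symm_apply, ih,
      polarF_apply_s14, Fin.coe_divNat, Fin.coe_modNat, Fin.val_cast]
    rw [cast_choose_eq_choose_mod_two_mul_choose_div_two r c, mul_comm]

/-- For `1 ≤ i ≤ L = 2^l`, the number of initial consecutive ones of the
`i`-th (1-indexed) row of `B_L = F^{⊗l}` equals `2^{v₂(i)}`, where `v₂` is the 2-adic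
valuation: every entry at a (0-indexed) column `< 2^{v₂(i)}` equals `1`, and the entry at
(0-indexed) column `2^{v₂(i)}`, if it exists, is not `1`. -/
theorem polarB_leading_ones (l : ℕ) (i : ℕ) (h1 : 1 ≤ i) (hL : i ≤ 2 ^ l) :
    (∀ j : Fin (2 ^ l), j.val < 2 ^ padicValNat 2 i → polarB l ⟨i - 1, by omega⟩ j = 1) ∧
    (∀ j : Fin (2 ^ l), j.val = 2 ^ padicValNat 2 i → polarB l ⟨i - 1, by omega⟩ j ≠ 1) := by
  have hodd : ¬ 2 ∣ i.divMaxPow 2 := Nat.not_dvd_divMaxPow one_lt_two (by omega)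
  have hi : i - 1 + 1 = 2 ^ padicValNat 2 i * (2 * (i.divMaxPow 2 / 2) + 1) := by
    rw [Nat.sub_add_cancel h1, show 2 * (i.divMaxPow 2 / 2) + 1 = i.divMaxPow 2 by omega,
      Nat.pow_padicValNat_mul_divMaxPow]
  obtain ⟨hones, hzero⟩ := cast_choose_of_succ_eq_two_pow_mul_odd hi
  refine ⟨fun j hj => ?_, fun j hj => ?_⟩
  · rw [polarB_apply_s14]
    exact hones j hj
  · rw [polarB_apply_s14, Fin.val_mk, hj, hzero]
    exact zero_ne_one
end
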